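/- Let Δ be a pure simplicial complex with shelling order F_1, …, F_t of its facets. Then the intervals [R(F_i), F_i] for i = 1, …, t partition Δ: every face S ∈ Δ satisfies R(F_i) ⊆ S ⊆ F_i for exactly one index i. -/

import Mathlib

open SimpleGraph

variable {V : Type*}

/-- `T` is a spanning tree of `G`: a subgraph of `G` (on the same vertex set) that is a tree. -/
def IsSpanningTree (G T : SimpleGraph V) : Prop :=
  T ≤ G ∧ T.IsTree

/-- `cutset G T e`: the set of edges of `G` whose endpoints lie in the two different
components of `T` with the edge `e` deleted. -/
def cutset (G T : SimpleGraph V) (e : Sym2 V) : Set (Sym2 V) :=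
  {f | f ∈ G.edgeSet ∧ ∀ u v : V, f = s(u, v) → ¬ (T.deleteEdges {e}).Reachable u v}

/-- `cycset T f`: the edge set of the unique cycle of `T` with the edge `f` added
(an edge of the unicyclic connected graph `T + f` lies on the cycle iff deleting it
keeps the graph connected). -/
def cycset (T : SimpleGraph V) (f : Sym2 V) : Set (Sym2 V) :=
  {e | e ∈ (T ⊔ fromEdgeSet {f}).edgeSet ∧
    ((T ⊔ fromEdgeSet {f}).deleteEdges {e}).Connected}

/-- An edge `e` of `T` is internally active if it is the minimum of `cutset G T e`. -/
def InternallyActive [LinearOrder (Sym2 V)] (G T : SimpleGraph V) (e : Sym2 V) : Prop :=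
  e ∈ T.edgeSet ∧ ∀ f ∈ cutset G T e, @LE.le (Sym2 V) (@Preorder.toLE _ (@PartialOrder.toPreorder _ (@LinearOrder.toPartialOrder _ ‹LinearOrder (Sym2 V)›))) e f

/-- `IN G T`: the set of internally inactive edges of `T`. -/
def IN [LinearOrder (Sym2 V)] (G T : SimpleGraph V) : Set (Sym2 V) :=
  {e | e ∈ T.edgeSet ∧ ¬ InternallyActive G T e}

/-- `C` is the edge set of some cycle of `G`. -/
def IsCycleEdgeSet (G : SimpleGraph V) (C : Set (Sym2 V)) : Prop :=
  ∃ (v : V) (w : G.Walk v v), w.IsCycle ∧ C = {e | e ∈ w.edges}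

/-- A broken circuit: the edge set of a cycle with its minimum edge removed. -/
def IsBrokenCircuit [LinearOrder (Sym2 V)] (G : SimpleGraph V) (B : Set (Sym2 V)) : Prop :=
  ∃ (C : Set (Sym2 V)) (e : Sym2 V),
    IsCycleEdgeSet G C ∧ e ∈ C ∧ (∀ f ∈ C, @LE.le (Sym2 V) (@Preorder.toLE _ (@PartialOrder.toPreorder _ (@LinearOrder.toPartialOrder _ ‹LinearOrder (Sym2 V)›))) e f) ∧ B = C \ {e}

/-- A set of edges is NBC if it contains no broken circuit. -/
def IsNBC [LinearOrder (Sym2 V)] (G : SimpleGraph V) (S : Set (Sym2 V)) : Prop :=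
  ∀ B : Set (Sym2 V), IsBrokenCircuit G B → ¬ B ⊆ S

/-- `T` is an NBC spanning tree of `G`. -/
def IsNBCSpanningTree [LinearOrder (Sym2 V)] (G T : SimpleGraph V) : Prop :=
  IsSpanningTree G T ∧ IsNBC G T.edgeSet

/-- The edge set of `T` written as a list in increasing order. -/
noncomputable def edgeList [Fintype V] [LinearOrder (Sym2 V)] (T : SimpleGraph V) :
    List (Sym2 V) :=
  (Set.toFinite T.edgeSet).toFinset.sort (fun a b => @LE.le (Sym2 V) (@Preorder.toLE _ (@PartialOrder.toPreorder _ (@LinearOrder.toPartialOrder _ ‹LinearOrder (Sym2 V)›))) a b)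

/-- Lexicographic order on spanning trees via their sorted edge lists. -/
def treeLexLT [Fintype V] [LinearOrder (Sym2 V)] (T T' : SimpleGraph V) : Prop :=
  List.Lex (fun a b => @LT.lt (Sym2 V) (@Preorder.toLT _ (@PartialOrder.toPreorder _ (@LinearOrder.toPartialOrder _ ‹LinearOrder (Sym2 V)›))) a b) (edgeList T) (edgeList T')

/-- for a pure shellable simplicial complex `Δ` with shelling order
`F 0, …, F (t-1)` of its facets and restriction sets `R i`, the intervals
`[R i, F i]` partition `Δ`: every face lies in exactly one such interval. -/
theorem shelling_intervals_partition
    {V : Type*} [Fintype V] [DecidableEq V]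
    (Δ : Set (Finset V)) (hne : Δ.Nonempty)
    (hdown : ∀ s ∈ Δ, ∀ u ⊆ s, u ∈ Δ)
    (t : ℕ) (F : Fin t → Finset V)
    (hF : ∀ i, F i ∈ Δ ∧ ∀ s ∈ Δ, F i ⊆ s → F i = s)
    (hall : ∀ s ∈ Δ, (∀ u ∈ Δ, s ⊆ u → s = u) → ∃ i, F i = s)
    (hinj : Function.Injective F)
    (hpure : ∀ i j, (F i).card = (F j).card)
    (hshelling : ∀ i j : Fin t, i < j → ∃ k, k < j ∧ ∃ x ∈ F j,
      F i ∩ F j ⊆ F k ∩ F j ∧ F k ∩ F j = F j \ {x})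
    (R : Fin t → Finset V)
    (hR : ∀ i x, x ∈ R i ↔ x ∈ F i ∧ ∃ k, k < i ∧ F i \ {x} ⊆ F k) :
    ∀ S ∈ Δ, ∃! i : Fin t, R i ⊆ S ∧ S ⊆ F i := by
  intro S hS
  -- S is contained in some facet
  obtain ⟨u, hu, humax⟩ := Set.Finite.exists_maximalFor Finset.card
      {u | u ∈ Δ ∧ S ⊆ u} (Set.toFinite _) ⟨S, hS, subset_rfl⟩
  have hmax : ∀ v ∈ Δ, u ⊆ v → u = v := by
    intro v hv huv
    exact Finset.eq_of_subset_of_card_le huv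
      (humax ⟨hv, hu.2.trans huv⟩ (Finset.card_le_card huv))
  obtain ⟨i0, hi0⟩ := hall u hu.1 hmax
  have hne' : ((Finset.univ.filter fun i : Fin t => S ⊆ F i)).Nonempty :=
    ⟨i0, by simp [hi0 ▸ hu.2]⟩
  obtain ⟨i, hi, hmin⟩ := Finset.exists_min_image _ id hne'
  simp only [Finset.mem_filter] at hi
  have hSFi : S ⊆ F i := hi.2
  have hRi : R i ⊆ S := by
    intro x hx
    by_contra hxS
    rw [hR] at hx
    obtain ⟨hxFi, k, hk, hsub⟩ := hx
    have hSk : S ⊆ F k := by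
      intro y hy
      refine hsub ?_
      simp only [Finset.mem_sdiff, Finset.mem_singleton]
      exact ⟨hSFi hy, fun h => hxS (h ▸ hy)⟩
    have hik : i ≤ k := hmin k (by simp [hSk])
    exact absurd hk (not_lt.mpr hik)
  have key : ∀ a b : Fin t, a < b → S ⊆ F a → S ⊆ F b → R b ⊆ S → False := by
    intro a b hab hSa hSb hRb
    obtain ⟨k, hk, x, hxFb, hsub, heq⟩ := hshelling a b hab
    have hSab : S ⊆ F a ∩ F b := Finset.subset_inter hSa hSb
    have hxS : x ∉ S := by
      intro hxS
      have hmem : x ∈ F b \ {x} := heq ▸ hsub (hSab hxS)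
      simp at hmem
    refine hxS (hRb ?_)
    rw [hR]
    refine ⟨hxFb, k, hk, ?_⟩
    intro y hy
    have : y ∈ F k ∩ F b := heq ▸ hy
    exact (Finset.mem_inter.mp this).1
  refine ⟨i, ⟨hRi, hSFi⟩, ?_⟩
  rintro j ⟨hRj, hSj⟩
  rcases lt_trichotomy j i with h | h | h
  · exact absurd (key j i h hSj hSFi hRi) (by simp)
  · exact h
  · exact absurd (key i j h hSFi hSj hRj) (by simp)
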